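/- Define p(α) = (1/√(2π)) · Γ(α+1/2)² · Γ(α+3/2) / (Γ(α+3/4) · Γ(α+1) · Γ(α+5/4)). Then √(2πα) · p(α) → 1 as α → ∞ (over the positive reals). -/

import Mathlib

open Real Filter

/-- The X-state separability probability function. -/
noncomputable def p (α : ℝ) : ℝ :=
  (1 / Real.sqrt (2*π)) * (Gamma (α + 1/2)^2 * Gamma (α + 3/2) /
    (Gamma (α + 3/4) * Gamma (α + 1) * Gamma (α + 5/4)))

/-!
Log-convexity of `Γ` together with `Γ (x + 1) = x Γ x` gives Wendel's inequality
`Γ (x + s) ≤ Γ x * x ^ s` for `0 < s < 1`; applied at `x + s` with exponent `1 - s` it also gives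
a matching lower bound, so `Γ (x + s) / (Γ x * x ^ s) → 1`. After the functional equation removes
the shifts by `1`, `√(2πα) p(α)` is a product of such ratios and of `(α + 1/2) / (α + 1/4)`.
-/

lemma tendsto_add_div_add_atTop (a b : ℝ) :
    Tendsto (fun x : ℝ => (x + a) / (x + b)) atTop (nhds 1) := by
  have h : Tendsto (fun x : ℝ => 1 + (a - b) / (x + b)) atTop (nhds (1 + 0)) :=
    tendsto_const_nhds.add <|
      tendsto_const_nhds.div_atTop (tendsto_atTop_add_const_right _ b tendsto_id)
  rw [add_zero] at h
  refine h.congr' ?_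
  filter_upwards [eventually_gt_atTop (-b)] with x hx
  field_simp [show x + b ≠ 0 by linarith]
  ring

namespace Real

theorem Gamma_add_le_Gamma_mul_rpow {x s : ℝ} (hx : 0 < x) (hs0 : 0 < s) (hs1 : s < 1) :
    Gamma (x + s) ≤ Gamma x * x ^ s := by
  have hΓ : 0 < Gamma x := Gamma_pos_of_pos hx
  calc Gamma (x + s) = Gamma ((1 - s) * x + s * (x + 1)) := by ring_nf
    _ ≤ Gamma x ^ (1 - s) * Gamma (x + 1) ^ s :=
      Gamma_mul_add_mul_le_rpow_Gamma_mul_rpow_Gamma hx (by linarith) (by linarith) hs0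
        (by ring)
    _ = Gamma x * x ^ s := by
      rw [Gamma_add_one hx.ne', mul_comm x, mul_rpow hΓ.le hx.le, ← mul_assoc,
        ← rpow_add hΓ, sub_add_cancel, rpow_one]

theorem tendsto_Gamma_add_div_Gamma_mul_rpow {s : ℝ} (hs0 : 0 < s) (hs1 : s < 1) :
    Tendsto (fun x : ℝ => Gamma (x + s) / (Gamma x * x ^ s)) atTop (nhds 1) := by
  have hlow : Tendsto (fun x : ℝ => (x / (x + s)) ^ (1 - s)) atTop (nhds 1) := by
    simpa using (tendsto_add_div_add_atTop 0 s).rpow_const (p := 1 - s) (Or.inl one_ne_zero)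
  refine tendsto_of_tendsto_of_tendsto_of_le_of_le' hlow tendsto_const_nhds ?_ ?_ <;>
    filter_upwards [eventually_gt_atTop 0] with x hx
  · have hxs : 0 < x + s := by linarith
    -- Wendel's upper bound at `x + s` with exponent `1 - s` is a lower bound at `x`.
    have hW := Gamma_add_le_Gamma_mul_rpow hxs (by linarith : 0 < 1 - s) (by linarith)
    rw [show x + s + (1 - s) = x + 1 by ring, Gamma_add_one hx.ne'] at hW
    rw [le_div_iff₀ (by positivity), div_rpow hx.le hxs.le, div_mul_eq_mul_div,
      div_le_iff₀ (by positivity)]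
    calc x ^ (1 - s) * (Gamma x * x ^ s) = x * Gamma x := by
          rw [mul_left_comm, ← rpow_add hx, sub_add_cancel, rpow_one, mul_comm]
      _ ≤ Gamma (x + s) * (x + s) ^ (1 - s) := hW
  · rw [div_le_one (by positivity)]
    exact Gamma_add_le_Gamma_mul_rpow hx hs0 hs1

end Real

lemma sqrt_two_pi_mul_mul_p_eq {α : ℝ} (hα : 0 < α) :
    √(2 * π * α) * p α = (α + 1/2) / (α + 1/4) *
      ((Gamma (α + 1/2) / (Gamma α * α ^ (1/2 : ℝ))) ^ 3 /
        (Gamma (α + 3/4) / (Gamma α * α ^ (3/4 : ℝ)) *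
          (Gamma (α + 1/4) / (Gamma α * α ^ (1/4 : ℝ))))) := by
  have : 0 < Gamma α := Gamma_pos_of_pos hα
  have : 0 < Gamma (α + 1/2) := Gamma_pos_of_pos (by positivity)
  have : 0 < Gamma (α + 3/4) := Gamma_pos_of_pos (by positivity)
  have : 0 < Gamma (α + 1/4) := Gamma_pos_of_pos (by positivity)
  have : 0 < α ^ (1/4 : ℝ) := by positivity
  have : 0 < α ^ (3/4 : ℝ) := by positivity
  have : 0 < α ^ (1/2 : ℝ) := by positivity
  have hhalf : α ^ (1/2 : ℝ) * α ^ (1/2 : ℝ) = α := by rw [← rpow_add hα]; norm_num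
  have hquarter : α ^ (1/4 : ℝ) * α ^ (3/4 : ℝ) = α := by rw [← rpow_add hα]; norm_num
  rw [p, show α + 3/2 = α + 1/2 + 1 by ring, show α + 5/4 = α + 1/4 + 1 by ring,
    Gamma_add_one (s := α + 1/2) (by positivity), Gamma_add_one (s := α + 1/4) (by positivity),
    Gamma_add_one hα.ne', sqrt_mul (by positivity), sqrt_eq_rpow α]
  field_simp
  linear_combination (α ^ (1/2 : ℝ) * α ^ (1/2 : ℝ) + α) * hhalf - α * hquarter

theorem p_asymptotic :
    Tendsto (fun α : ℝ => Real.sqrt (2*π*α) * p α) atTop (nhds 1) := by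
  have h := (tendsto_add_div_add_atTop (1/2) (1/4)).mul
    (((tendsto_Gamma_add_div_Gamma_mul_rpow (s := 1/2) (by norm_num) (by norm_num)).pow 3).div
      ((tendsto_Gamma_add_div_Gamma_mul_rpow (s := 3/4) (by norm_num) (by norm_num)).mul
        (tendsto_Gamma_add_div_Gamma_mul_rpow (s := 1/4) (by norm_num) (by norm_num)))
      (by norm_num))
  rw [one_pow, mul_one, div_one, mul_one] at h
  refine h.congr' ?_
  filter_upwards [eventually_gt_atTop 0] with α hα using (sqrt_two_pi_mul_mul_p_eq hα).symm
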